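/- Let q ≥ 2, n ≥ 2, and let φ be the canonical Carlitz deformation φ_θ = (t₁−θ)⋯(t_n−θ)τ + θ over A[t₁,…,t_n]. Let u ∈ A[t₁,…,t_n]∖{0} have leading coefficient (in θ) in F_q^×. If c ∈ F_q(t₁,…,t_n)[θ] satisfies φ_c(u) ∈ A[t₁,…,t_n], then c ∈ A[t₁,…,t_n]. -/

import Mathlib

open Polynomial

/-- The Frobenius twist `τ` on `k(t₁,…,t_n)[θ]`: it fixes the coefficient
field (which is generated by the `t_i` over `F_q`) and sends `θ ↦ θ^q`. -/
noncomputable def frobTwist (R : Type*) [CommSemiring R] (q : ℕ) :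
    Polynomial R →ₗ[R] Polynomial R where
  toFun p := p.comp (Polynomial.X ^ q)
  map_add' a b := by simp [Polynomial.add_comp]
  map_smul' c p := by simp [Polynomial.smul_comp]

/-- The canonical Carlitz deformation `φ_θ = (t₁−θ)⋯(t_n−θ)τ + θ`, as a
`k(t₁,…,t_n)`-linear endomorphism of `k(t₁,…,t_n)[θ]`. -/
noncomputable def carlitzDefTheta (KK : Type*) [CommRing KK] (q : ℕ)
    (f : Polynomial KK) : Module.End KK (Polynomial KK) :=
  (LinearMap.mulLeft KK f).comp (frobTwist KK q) + LinearMap.mulLeft KK Polynomial.X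


/-!
Write `T = φ_θ` and `Eᵢ = Tⁱ u`, so that `φ_c(u) = ∑ cᵢ Eᵢ`. Because `deg f ≥ 2` and `q ≥ 1`, the
term `f · τ p` of `T p` strictly dominates `θ · p`; hence `deg Eᵢ` is strictly increasing and
`lc Eᵢ = (lc f)ⁱ · lc u` is a unit of `F_q[t₁,…,t_n]`, the ring that holds all coefficients of
every `Eᵢ`. The top `θ`-coefficient of `∑_{i ≤ N} cᵢ Eᵢ` is then `c_N · lc E_N`, which
forces `c_N` to be integral; subtracting `c_N E_N` and descending on `N` gives the rest.
-/

open Finset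

theorem carlitzDefTheta_apply {K : Type*} [CommRing K] (q : ℕ) (f p : K[X]) :
    carlitzDefTheta K q f p = f * expand K q p + X * p := rfl

section Degree

variable {K : Type*} [CommRing K] [IsDomain K] {q : ℕ} {f : K[X]}

theorem natDegree_mul_expand (hq : 0 < q) (hf : 2 ≤ f.natDegree) {p : K[X]} (hp : p ≠ 0) :
    (f * expand K q p).natDegree = f.natDegree + p.natDegree * q := by
  have hf0 : f ≠ 0 := ne_zero_of_natDegree_gt hf
  rw [natDegree_mul hf0 ((expand_ne_zero hq).2 hp), natDegree_expand]

theorem degree_X_mul_lt_degree_mul_expand (hq : 0 < q) (hf : 2 ≤ f.natDegree) {p : K[X]}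
    (hp : p ≠ 0) : (X * p).degree < (f * expand K q p).degree := by
  refine degree_lt_degree ?_
  rw [natDegree_mul_expand hq hf hp, natDegree_X_mul hp]
  nlinarith

theorem natDegree_carlitzDefTheta_apply (hq : 0 < q) (hf : 2 ≤ f.natDegree) {p : K[X]}
    (hp : p ≠ 0) :
    (carlitzDefTheta K q f p).natDegree = f.natDegree + p.natDegree * q := by
  rw [carlitzDefTheta_apply, ← natDegree_mul_expand hq hf hp]
  exact natDegree_add_eq_left_of_degree_lt (degree_X_mul_lt_degree_mul_expand hq hf hp)

theorem leadingCoeff_carlitzDefTheta_apply (hq : 0 < q) (hf : 2 ≤ f.natDegree) {p : K[X]}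
    (hp : p ≠ 0) :
    (carlitzDefTheta K q f p).leadingCoeff = f.leadingCoeff * p.leadingCoeff := by
  rw [carlitzDefTheta_apply, leadingCoeff_add_of_degree_lt'
    (degree_X_mul_lt_degree_mul_expand hq hf hp), leadingCoeff_mul, leadingCoeff_expand hq]

theorem leadingCoeff_carlitzDefTheta_pow_apply (hq : 0 < q) (hf : 2 ≤ f.natDegree) {u : K[X]}
    (hu : u ≠ 0) (i : ℕ) :
    ((carlitzDefTheta K q f ^ i) u).leadingCoeff = f.leadingCoeff ^ i * u.leadingCoeff := by
  induction i with
  | zero => simp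
  | succ i ih =>
    have hf0 : f ≠ 0 := ne_zero_of_natDegree_gt hf
    have hi : (carlitzDefTheta K q f ^ i) u ≠ 0 := by
      rw [← leadingCoeff_ne_zero, ih]
      exact mul_ne_zero (pow_ne_zero _ (leadingCoeff_ne_zero.2 hf0)) (leadingCoeff_ne_zero.2 hu)
    rw [pow_succ', Module.End.mul_apply, leadingCoeff_carlitzDefTheta_apply hq hf hi, ih]
    ring

theorem carlitzDefTheta_pow_apply_ne_zero (hq : 0 < q) (hf : 2 ≤ f.natDegree) {u : K[X]}
    (hu : u ≠ 0) (i : ℕ) : (carlitzDefTheta K q f ^ i) u ≠ 0 := by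
  rw [← leadingCoeff_ne_zero, leadingCoeff_carlitzDefTheta_pow_apply hq hf hu]
  exact mul_ne_zero (pow_ne_zero _ (leadingCoeff_ne_zero.2 (ne_zero_of_natDegree_gt hf)))
    (leadingCoeff_ne_zero.2 hu)

theorem strictMono_natDegree_carlitzDefTheta_pow_apply (hq : 0 < q) (hf : 2 ≤ f.natDegree)
    {u : K[X]} (hu : u ≠ 0) :
    StrictMono fun i => ((carlitzDefTheta K q f ^ i) u).natDegree := by
  refine strictMono_nat_of_lt_succ fun i => ?_
  rw [pow_succ', Module.End.mul_apply,
    natDegree_carlitzDefTheta_apply hq hf (carlitzDefTheta_pow_apply_ne_zero hq hf hu i)]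
  nlinarith

end Degree

section Integrality

variable {R K : Type*} [CommRing R] [CommRing K] (ι : R →+* K)

theorem carlitzDefTheta_pow_apply_mem_map_range {q : ℕ} {f u : K[X]}
    (hf : f ∈ (mapRingHom ι).range) (hu : u ∈ (mapRingHom ι).range) (i : ℕ) :
    (carlitzDefTheta K q f ^ i) u ∈ (mapRingHom ι).range := by
  obtain ⟨f₀, rfl⟩ := hf
  induction i with
  | zero => simpa using hu
  | succ i ih =>
    obtain ⟨p₀, hp₀⟩ := ih
    refine ⟨f₀ * expand R q p₀ + X * p₀, ?_⟩
    rw [pow_succ', Module.End.mul_apply, ← hp₀]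
    simp [carlitzDefTheta_apply, map_expand]

theorem mem_range_of_sum_smul_mem_map_range {E : ℕ → K[X]}
    (hE : StrictMono fun i => (E i).natDegree) (hEint : ∀ i, E i ∈ (mapRingHom ι).range)
    (hElc : ∀ i, ∃ r, ι r * (E i).leadingCoeff = 1) (a : ℕ → K) (N : ℕ)
    (ha : ∑ i ∈ range N, a i • E i ∈ (mapRingHom ι).range) : ∀ i < N, a i ∈ ι.range := by
  induction N with
  | zero => simp
  | succ N ih =>
    rw [sum_range_succ] at ha
    have htop : (∑ i ∈ range N, a i • E i + a N • E N).coeff (E N).natDegree =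
        a N * (E N).leadingCoeff := by
      rw [coeff_add, finsetSum_coeff, sum_eq_zero, zero_add, coeff_smul, smul_eq_mul,
        coeff_natDegree]
      intro i hi
      rw [coeff_smul, coeff_eq_zero_of_natDegree_lt (hE (mem_range.1 hi)), smul_zero]
    have haN : a N ∈ ι.range := by
      obtain ⟨r, hr⟩ := hElc N
      have h := mul_mem (ι.mem_range_self r) ((mem_map_range ι).1 ha (E N).natDegree)
      rwa [htop, mul_left_comm, hr, mul_one] at h
    have hEN : a N • E N ∈ (mapRingHom ι).range := by
      obtain ⟨b, hb⟩ := haN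
      rw [smul_eq_C_mul, ← hb]
      exact mul_mem ⟨C b, by simp⟩ (hEint N)
    have hrest := ih (by simpa using sub_mem ha hEN)
    intro i hi
    rcases (Nat.lt_succ_iff_lt_or_eq.1 hi) with hi | rfl
    exacts [hrest i hi, haN]

end Integrality

theorem mem_map_range_of_aeval_carlitzDefTheta_apply_mem {R K : Type*} [CommRing R] [CommRing K]
    [IsDomain K] (ι : R →+* K) {q : ℕ} (hq : 0 < q) {f u : K[X]} (hf : 2 ≤ f.natDegree)
    (hfint : f ∈ (mapRingHom ι).range) (hflc : ∃ r, ι r * f.leadingCoeff = 1)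
    (huint : u ∈ (mapRingHom ι).range) (hulc : ∃ r, ι r * u.leadingCoeff = 1) (c : K[X])
    (hc : aeval (carlitzDefTheta K q f) c u ∈ (mapRingHom ι).range) :
    c ∈ (mapRingHom ι).range := by
  have hu : u ≠ 0 := by
    rintro rfl
    obtain ⟨r, hr⟩ := hulc
    simp at hr
  obtain ⟨rf, hrf⟩ := hflc
  obtain ⟨ru, hru⟩ := hulc
  have hElc (i : ℕ) : ∃ r, ι r * ((carlitzDefTheta K q f ^ i) u).leadingCoeff = 1 :=
    ⟨rf ^ i * ru, by
      rw [leadingCoeff_carlitzDefTheta_pow_apply hq hf hu, map_mul, map_pow,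
        mul_mul_mul_comm, ← mul_pow, hrf, hru, one_pow, one_mul]⟩
  rw [aeval_endomorphism,
    sum_over_range _ fun n => zero_smul K ((carlitzDefTheta K q f ^ n) u)] at hc
  have hcoeff := mem_range_of_sum_smul_mem_map_range ι
    (strictMono_natDegree_carlitzDefTheta_pow_apply hq hf hu)
    (carlitzDefTheta_pow_apply_mem_map_range ι hfint huint) hElc c.coeff _ hc
  refine (mem_map_range ι).2 fun m => ?_
  rcases lt_or_ge m (c.natDegree + 1) with hm | hm
  · exact hcoeff m hm
  · rw [coeff_eq_zero_of_natDegree_lt hm]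
    exact zero_mem _

theorem natDegree_prod_C_sub_X {K α : Type*} [CommRing K] [IsDomain K] (s : Finset α)
    (x : α → K) : (∏ a ∈ s, (C (x a) - X)).natDegree = #s := by
  rw [prod_congr rfl fun a _ => (neg_sub X (C (x a))).symm, prod_neg,
    natDegree_mul (by simp) (monic_prod_of_monic _ _ fun a _ => monic_X_sub_C (x a)).ne_zero]
  simp

theorem leadingCoeff_prod_C_sub_X {K α : Type*} [CommRing K] [IsDomain K] (s : Finset α)
    (x : α → K) : (∏ a ∈ s, (C (x a) - X)).leadingCoeff = (-1) ^ #s := by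
  rw [prod_congr rfl fun a _ => (neg_sub X (C (x a))).symm, prod_neg]
  simp [leadingCoeff_prod]

theorem division_lemma_carlitz_deformation_general
    (Fq : Type*) [Field Fq]
    (q : ℕ) (hq2 : 2 ≤ q)
    (n : ℕ) (hn : 2 ≤ n)
    (f : Polynomial (FractionRing (MvPolynomial (Fin n) Fq)))
    (hf : f = ∏ i : Fin n,
      (Polynomial.C (algebraMap (MvPolynomial (Fin n) Fq) _ (MvPolynomial.X i))
        - Polynomial.X))
    (u : Polynomial (FractionRing (MvPolynomial (Fin n) Fq)))
    (huInt : ∀ m : ℕ, u.coeff m ∈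
      (algebraMap (MvPolynomial (Fin n) Fq)
        (FractionRing (MvPolynomial (Fin n) Fq))).range)
    (hulead : ∃ c₀ : Fq, c₀ ≠ 0 ∧ u.leadingCoeff =
      algebraMap (MvPolynomial (Fin n) Fq) _ (MvPolynomial.C c₀))
    (c : Polynomial (FractionRing (MvPolynomial (Fin n) Fq)))
    (hc : ∀ m : ℕ,
      ((Polynomial.aeval
          (carlitzDefTheta (FractionRing (MvPolynomial (Fin n) Fq)) q f) c) u).coeff m ∈
        (algebraMap (MvPolynomial (Fin n) Fq)
          (FractionRing (MvPolynomial (Fin n) Fq))).range) :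
    ∀ m : ℕ, c.coeff m ∈
      (algebraMap (MvPolynomial (Fin n) Fq)
        (FractionRing (MvPolynomial (Fin n) Fq))).range := by
  set ι := algebraMap (MvPolynomial (Fin n) Fq) (FractionRing (MvPolynomial (Fin n) Fq))
  have hfdeg : 2 ≤ f.natDegree := by simpa [hf, natDegree_prod_C_sub_X] using hn
  have hfint : f ∈ (mapRingHom ι).range :=
    ⟨∏ i : Fin n, (C (MvPolynomial.X i) - X), by simp [hf]⟩
  have hflc : ∃ r, ι r * f.leadingCoeff = 1 :=
    ⟨(-1) ^ n, by simp [hf, leadingCoeff_prod_C_sub_X, ← mul_pow]⟩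
  obtain ⟨c₀, hc₀, hlead⟩ := hulead
  have hulc : ∃ r, ι r * u.leadingCoeff = 1 :=
    ⟨MvPolynomial.C c₀⁻¹, by
      rw [hlead, ← map_mul, ← MvPolynomial.C_mul, inv_mul_cancel₀ hc₀, MvPolynomial.C_1, map_one]⟩
  exact (mem_map_range ι).1 <| mem_map_range_of_aeval_carlitzDefTheta_apply_mem ι (by omega)
    hfdeg hfint hflc ((mem_map_range ι).2 huInt) hulc c ((mem_map_range ι).2 hc)

/-- Let `q ≥ 2`, `n ≥ 2`, and let `φ` be the canonical
Carlitz deformation `φ_θ = (t₁−θ)⋯(t_n−θ)τ + θ` over `A[t₁,…,t_n]`,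
extended `F_q(t₁,…,t_n)`-linearly to `𝔸 = F_q(t₁,…,t_n)[θ]`
(via `c ↦ φ_c = c(φ_θ)`).  Let `u ∈ A[t₁,…,t_n] ∖ {0}` have leading
coefficient (in `θ`) in `F_q^×`.  If `c ∈ F_q(t₁,…,t_n)[θ]` satisfies
`φ_c(u) ∈ A[t₁,…,t_n]`, then `c ∈ A[t₁,…,t_n]`. -/
theorem division_lemma_carlitz_deformation
    (Fq : Type*) [Field Fq] [Fintype Fq]
    (q : ℕ) (hq : q = Fintype.card Fq) (hq2 : 2 ≤ q)
    (n : ℕ) (hn : 2 ≤ n)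
    (f : Polynomial (FractionRing (MvPolynomial (Fin n) Fq)))
    (hf : f = ∏ i : Fin n,
      (Polynomial.C (algebraMap (MvPolynomial (Fin n) Fq) _ (MvPolynomial.X i))
        - Polynomial.X))
    (u : Polynomial (FractionRing (MvPolynomial (Fin n) Fq)))
    (hu0 : u ≠ 0)
    (huInt : ∀ m : ℕ, u.coeff m ∈
      (algebraMap (MvPolynomial (Fin n) Fq)
        (FractionRing (MvPolynomial (Fin n) Fq))).range)
    (hulead : ∃ c₀ : Fq, c₀ ≠ 0 ∧ u.leadingCoeff =
      algebraMap (MvPolynomial (Fin n) Fq) _ (MvPolynomial.C c₀))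
    (c : Polynomial (FractionRing (MvPolynomial (Fin n) Fq)))
    (hc : ∀ m : ℕ,
      ((Polynomial.aeval
          (carlitzDefTheta (FractionRing (MvPolynomial (Fin n) Fq)) q f) c) u).coeff m ∈
        (algebraMap (MvPolynomial (Fin n) Fq)
          (FractionRing (MvPolynomial (Fin n) Fq))).range) :
    ∀ m : ℕ, c.coeff m ∈
      (algebraMap (MvPolynomial (Fin n) Fq)
        (FractionRing (MvPolynomial (Fin n) Fq))).range :=
  division_lemma_carlitz_deformation_general Fq q hq2 n hn f hf u huInt hulead c hc
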